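/- Let M be a Feynman–Kac model with horizon n, let K = (t,R,K) be a knot compatible with M (t < n), and let M* = K ∗ M. Let M and M* have terminal predictive measures γ_n and γ*_n and asymptotic variance maps σ² and σ²_*. If φ ∈ F(M) (i.e. σ²(φ) < ∞), then γ_n(φ) = γ*_n(φ) and σ²_*(φ) ≤ σ²(φ). -/

import Mathlib

open MeasureTheory
open scoped ENNReal

noncomputable section

namespace KnotsPaper

variable {α β γ : Type*}

/-- Composition of measure-valued maps ("kernels"): `(L K)(x,·) = ∫ L(x,dy) K(y,·)`. -/
def kcomp [MeasurableSpace β] [MeasurableSpace γ]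
    (L : α → Measure β) (K : β → Measure γ) : α → Measure γ :=
  fun x => (L x).bind K

/-- A kernel applied to a nonnegative function: `K(H)(x) = ∫ H(y) K(x,dy)`. -/
def kap [MeasurableSpace β] (K : α → Measure β) (H : β → ℝ≥0∞) : α → ℝ≥0∞ :=
  fun x => ∫⁻ y, H y ∂(K x)

/-- Twisted kernel `K^H`: `K^H(x,dy) = K(x,dy)H(y)/K(H)(x)` when `K(H)(x) > 0`,
and `K(x,·)` when `K(H)(x) = 0`. -/
def twist [MeasurableSpace β] (K : α → Measure β) (H : β → ℝ≥0∞) : α → Measure β :=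
  fun x => if kap K H x = 0 then K x else (kap K H x)⁻¹ • (K x).withDensity H

/-- Markov kernel property for a measure-valued map. -/
def IsKernel [MeasurableSpace α] [MeasurableSpace β] (K : α → Measure β) : Prop :=
  Measurable K ∧ ∀ x, IsProbabilityMeasure (K x)

/-- Conditional variance `Var_K(f)(x) = K(f²)(x) − (K(f)(x))²` (real-valued). -/
def varK [MeasurableSpace β] (K : α → Measure β) (f : β → ℝ) : α → ℝ :=
  fun x => (∫ y, (f y) ^ 2 ∂(K x)) - (∫ y, f y ∂(K x)) ^ 2

/-- Conditional variance `Var_K(f)(x) = K(f²)(x) − (K(f)(x))²` in `ℝ≥0∞`. -/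
def varK' [MeasurableSpace β] (K : α → Measure β) (f : β → ℝ) : α → ℝ≥0∞ :=
  fun x => (∫⁻ y, ENNReal.ofReal ((f y) ^ 2) ∂(K x)) - ENNReal.ofReal ((∫ y, f y ∂(K x)) ^ 2)

/-- Conditional covariance `Cov_K(f,g)(x) = K(f·g)(x) − K(f)(x)·K(g)(x)`. -/
def covK [MeasurableSpace β] (K : α → Measure β) (f g : β → ℝ) : α → ℝ :=
  fun x => (∫ y, f y * g y ∂(K x)) - (∫ y, f y ∂(K x)) * (∫ y, g y ∂(K x))

/-- Tensor product of kernels: `(U ⊗ W)(x, d[y,z]) = U(x,dy) W(y,dz)`. -/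
def ktens [MeasurableSpace β] [MeasurableSpace γ]
    (U : α → Measure β) (W : β → Measure γ) : α → Measure (β × γ) :=
  fun x => (U x).bind (fun y => (W y).map (fun z => (y, z)))

variable {E : Type*} [MeasurableSpace E]

/-- A discrete-time (updated) Feynman--Kac model with horizon `n`:
an initial distribution `init`, Markov kernels `M p` (used for `p ∈ [1,n]`)
and potential functions `G p` (used for `p ∈ [0,n]`). -/
structure FK (E : Type*) [MeasurableSpace E] (n : ℕ) where
  init : Measure E
  M : ℕ → E → Measure E
  G : ℕ → E → ℝ≥0∞

namespace FK

variable {n : ℕ}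

/-- Regularity of a Feynman--Kac model: the initial distribution is a probability
measure, the `M p` are Markov kernels, and the potentials `G p` are measurable,
`[0,∞)`-valued and integrable with respect to `M p (x, ·)` for all `x` (resp. `init`). -/
def Reg (𝓜 : FK E n) : Prop :=
  IsProbabilityMeasure 𝓜.init ∧
  (∀ p, 1 ≤ p → p ≤ n → IsKernel (𝓜.M p)) ∧
  (∀ p, p ≤ n → Measurable (𝓜.G p)) ∧
  (∀ p x, 𝓜.G p x ≠ ∞) ∧
  (∫⁻ x, 𝓜.G 0 x ∂𝓜.init) ≠ ∞ ∧
  (∀ p x, 1 ≤ p → p ≤ n → kap (𝓜.M p) (𝓜.G p) x ≠ ∞)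

/-- Predictive measures `γ_p`. -/
def gamma (𝓜 : FK E n) : ℕ → Measure E
  | 0 => 𝓜.init
  | p + 1 => ((gamma 𝓜 p).withDensity (𝓜.G p)).bind (𝓜.M (p + 1))

/-- Updated measures `γ̂_p`. -/
def gammaHat (𝓜 : FK E n) (p : ℕ) : Measure E := (𝓜.gamma p).withDensity (𝓜.G p)

/-- Normalised predictive measures `η_p`. -/
def eta (𝓜 : FK E n) (p : ℕ) : Measure E := ((𝓜.gamma p) Set.univ)⁻¹ • 𝓜.gamma p

/-- Normalised updated measures `η̂_p`. -/
def etaHat (𝓜 : FK E n) (p : ℕ) : Measure E := ((𝓜.gammaHat p) Set.univ)⁻¹ • 𝓜.gammaHat p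

/-- The kernels `Q_{p,n}`: `Q_{n,n} = Id` and `Q_{p,n} = Q_{p+1} Q_{p+1,n}` where
`Q_{p+1}(x,dy) = G_p(x) M_{p+1}(x,dy)`. -/
def Qto (𝓜 : FK E n) (p : ℕ) : E → Measure E :=
  if _h : n ≤ p then fun x => Measure.dirac x
  else fun x => ((𝓜.G p x) • (𝓜.M (p + 1) x)).bind (Qto 𝓜 (p + 1))
termination_by n - p
decreasing_by omega

/-- `Q_{p,n}(φ)`. -/
def Qf (𝓜 : FK E n) (p : ℕ) (φ : E → ℝ) : E → ℝ := fun x => ∫ y, φ y ∂(𝓜.Qto p x)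

/-- The asymptotic variance terms
`v_{p,n}(φ) = γ_p(1) γ_p(Q_{p,n}(φ)²)/γ_n(1)² − η_n(φ)²` (valued in `[0,∞]`). -/
def v (𝓜 : FK E n) (p : ℕ) (φ : E → ℝ) : ℝ≥0∞ :=
  𝓜.gamma p Set.univ * (∫⁻ x, ENNReal.ofReal ((𝓜.Qf p φ x) ^ 2) ∂(𝓜.gamma p))
      / (𝓜.gamma n Set.univ) ^ 2
    - ENNReal.ofReal ((∫ x, φ x ∂(𝓜.eta n)) ^ 2)

/-- The (predictive) asymptotic variance map `σ²(φ) = Σ_{p=0}^n v_{p,n}(φ)`. -/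
def var (𝓜 : FK E n) (φ : E → ℝ) : ℝ≥0∞ := ∑ p ∈ Finset.range (n + 1), 𝓜.v p φ

/-- The updated asymptotic variance terms `v̂_{p,n}(φ) = v_{p,n}(G_n·φ)/η_n(G_n)²`. -/
def vhat (𝓜 : FK E n) (p : ℕ) (φ : E → ℝ) : ℝ≥0∞ :=
  𝓜.v p (fun x => (𝓜.G n x).toReal * φ x)
    / ENNReal.ofReal ((∫ x, (𝓜.G n x).toReal ∂(𝓜.eta n)) ^ 2)

/-- The updated asymptotic variance map `σ̂²(φ)`. -/
def varHat (𝓜 : FK E n) (φ : E → ℝ) : ℝ≥0∞ := ∑ p ∈ Finset.range (n + 1), 𝓜.vhat p φ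

/-- The class `F(M)` of relevant test functions for the predictive measure. -/
def memF (𝓜 : FK E n) (φ : E → ℝ) : Prop := Integrable φ (𝓜.eta n) ∧ 𝓜.var φ ≠ ∞

/-- The class `F̂(M)` of relevant test functions for the updated measure. -/
def memFhat (𝓜 : FK E n) (φ : E → ℝ) : Prop := Integrable φ (𝓜.etaHat n) ∧ 𝓜.varHat φ ≠ ∞

end FK

/-- Application of a single knot `(t,R,K)` with `1 ≤ t < n` to a model:
`M*_t = R`, `G*_t = K(G_t)`, `M*_{t+1} = K^{G_t} M_{t+1}`, everything else unchanged. -/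
def knotApply {n : ℕ} (t : ℕ) (R K : E → Measure E) (𝓜 : FK E n) : FK E n where
  init := 𝓜.init
  M := fun p =>
    if p = t then R
    else if p = t + 1 then kcomp (twist K (𝓜.G t)) (𝓜.M (t + 1))
    else 𝓜.M p
  G := fun p => if p = t then kap K (𝓜.G t) else 𝓜.G p

/-- Application of a knot `(0,R₀,K)` at time `0` (where `R₀` is a probability measure):
`M*_0 = R₀`, `G*_0 = K(G_0)`, `M*_1 = K^{G_0} M_1`, everything else unchanged. -/
def knotApply0 {n : ℕ} (R0 : Measure E) (K : E → Measure E) (𝓜 : FK E n) : FK E n where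
  init := R0
  M := fun p => if p = 1 then kcomp (twist K (𝓜.G 0)) (𝓜.M 1) else 𝓜.M p
  G := fun p => if p = 0 then kap K (𝓜.G 0) else 𝓜.G p

/-- A knotset `(R_{0:n-1}, K_{0:n-1})`: `n` knots `(p, R_p, K_p)`, `p ∈ [0,n-1]`,
where `R_0` is a probability measure (recorded in `R0`). -/
structure Knotset (E : Type*) [MeasurableSpace E] (n : ℕ) where
  R0 : Measure E
  R : ℕ → E → Measure E
  K : ℕ → E → Measure E

namespace Knotset

variable {n : ℕ}

/-- Regularity of a knotset: its constituents are (probability) Markov kernels. -/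
def Reg (𝓚 : Knotset E n) : Prop :=
  IsProbabilityMeasure 𝓚.R0 ∧
  (∀ p, 1 ≤ p → p < n → IsKernel (𝓚.R p)) ∧
  (∀ p, p < n → IsKernel (𝓚.K p))

/-- Compatibility of a knotset with a model: `R_p K_p = M_p` for every `p ∈ [0,n-1]`. -/
def Compat (𝓚 : Knotset E n) (𝓜 : FK E n) : Prop :=
  𝓚.R0.bind (𝓚.K 0) = 𝓜.init ∧
  ∀ p, 1 ≤ p → p < n → kcomp (𝓚.R p) (𝓚.K p) = 𝓜.M p

/-- The knot-model `K ∗ M` in closed form: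
`M*_0 = R_0`, `G*_0 = K_0(G_0)`, `M*_p = K_{p-1}^{G_{p-1}} R_p`, `G*_p = K_p(G_p)` for
`p ∈ [1,n-1]`, `M*_n = K_{n-1}^{G_{n-1}} M_n` and `G*_n = G_n`. -/
def apply (𝓚 : Knotset E n) (𝓜 : FK E n) : FK E n where
  init := 𝓚.R0
  M := fun p =>
    if p = 0 then 𝓜.M 0
    else if p < n then kcomp (twist (𝓚.K (p - 1)) (𝓜.G (p - 1))) (𝓚.R p)
    else if p = n then kcomp (twist (𝓚.K (n - 1)) (𝓜.G (n - 1))) (𝓜.M n)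
    else 𝓜.M p
  G := fun p => if p < n then kap (𝓚.K p) (𝓜.G p) else 𝓜.G p

/-- The sequential application `K_t ∗ K_{t+1} ∗ ⋯ ∗ K_{n-1} ∗ M` of the knots of a
knotset at times `t, t+1, ..., n-1` (in descending time order), for `1 ≤ t`. -/
def applyFrom (𝓚 : Knotset E n) (𝓜 : FK E n) (t : ℕ) : FK E n :=
  if _h : t < n then knotApply t (𝓚.R t) (𝓚.K t) (applyFrom 𝓚 𝓜 (t + 1))
  else 𝓜
termination_by n - t
decreasing_by omega

/-- The knotset operator defined as the sequential application
`K ∗ M = K_0 ∗ K_1 ∗ ⋯ ∗ K_{n-1} ∗ M` of its knots in descending time order. -/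
def seqApply (𝓚 : Knotset E n) (𝓜 : FK E n) : FK E n :=
  knotApply0 𝓚.R0 (𝓚.K 0) (𝓚.applyFrom 𝓜 1)

end Knotset

/-- One application of a compatible knotset. -/
def KnotStep {n : ℕ} (𝓜' 𝓜 : FK E n) : Prop :=
  ∃ 𝓚 : Knotset E n, 𝓚.Reg ∧ 𝓚.Compat 𝓜 ∧ 𝓜' = 𝓚.apply 𝓜

/-- The partial order on Feynman--Kac models induced by knotsets:
`M* ≼ M` iff `M* = K_m ∗ ⋯ ∗ K_1 ∗ M` for some finite sequence of compatible knotsets. -/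
def KnotOrder {n : ℕ} (𝓜' 𝓜 : FK E n) : Prop :=
  Relation.TransGen KnotStep 𝓜' 𝓜

/-- The adapted knotset for a model `M`: the knot at time `p ≥ 1` is `(p, Id, M_p)`
and the knot at time `0` is `(0, δ_{x₀}, K_0)` with `K_0(x₀,·) = M_0`. -/
def IsAdaptedKnotset {n : ℕ} (𝓚 : Knotset E n) (𝓜 : FK E n) : Prop :=
  (∃ x₀ : E, 𝓚.R0 = Measure.dirac x₀ ∧ 𝓚.K 0 x₀ = 𝓜.init) ∧
  (∀ p, 1 ≤ p → p < n →
    𝓚.R p = (fun x => Measure.dirac x) ∧ 𝓚.K p = 𝓜.M p)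

/-- A Feynman--Kac model with horizon `n ≥ 1` whose terminal state space is the
product `E × E` (as arises from a `φ`-extension): terminal Markov kernel `Mn` and
terminal potential `Gn` are defined on the product space. -/
structure FKx (E : Type*) [MeasurableSpace E] (n : ℕ) where
  init : Measure E
  M : ℕ → E → Measure E
  Mn : E → Measure (E × E)
  G : ℕ → E → ℝ≥0∞
  Gn : E × E → ℝ≥0∞

namespace FKx

variable {n : ℕ}

/-- Predictive measures `γ_p` for `p ≤ n-1`. -/
def gamma (𝓝 : FKx E n) : ℕ → Measure E
  | 0 => 𝓝.init
  | p + 1 => ((gamma 𝓝 p).withDensity (𝓝.G p)).bind (𝓝.M (p + 1))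

/-- Updated measures `γ̂_p` for `p ≤ n-1`. -/
def gammaHat (𝓝 : FKx E n) (p : ℕ) : Measure E := (𝓝.gamma p).withDensity (𝓝.G p)

/-- Normalised predictive measures `η_p` for `p ≤ n-1`. -/
def eta (𝓝 : FKx E n) (p : ℕ) : Measure E := ((𝓝.gamma p) Set.univ)⁻¹ • 𝓝.gamma p

/-- Normalised updated measures `η̂_p` for `p ≤ n-1`. -/
def etaHat (𝓝 : FKx E n) (p : ℕ) : Measure E := ((𝓝.gammaHat p) Set.univ)⁻¹ • 𝓝.gammaHat p

/-- Terminal predictive measure `γ_n` (on the product space). -/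
def gammaN (𝓝 : FKx E n) : Measure (E × E) := (𝓝.gammaHat (n - 1)).bind 𝓝.Mn

/-- Terminal updated measure `γ̂_n`. -/
def gammaHatN (𝓝 : FKx E n) : Measure (E × E) := 𝓝.gammaN.withDensity 𝓝.Gn

/-- Terminal normalised predictive measure `η_n`. -/
def etaN (𝓝 : FKx E n) : Measure (E × E) := (𝓝.gammaN Set.univ)⁻¹ • 𝓝.gammaN

/-- Terminal normalised updated measure `η̂_n`. -/
def etaHatN (𝓝 : FKx E n) : Measure (E × E) := (𝓝.gammaHatN Set.univ)⁻¹ • 𝓝.gammaHatN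

/-- Kernels `Q_{p,n}` (into the terminal product space), for `p ≤ n-1`. -/
def Qto (𝓝 : FKx E n) (p : ℕ) : E → Measure (E × E) :=
  if _h : n - 1 ≤ p then fun x => (𝓝.G (n - 1) x) • (𝓝.Mn x)
  else fun x => ((𝓝.G p x) • (𝓝.M (p + 1) x)).bind (Qto 𝓝 (p + 1))
termination_by n - 1 - p
decreasing_by omega

/-- `Q_{p,n}(φ)` for `p ≤ n-1`. -/
def Qf (𝓝 : FKx E n) (p : ℕ) (φ : E × E → ℝ) : E → ℝ := fun x => ∫ z, φ z ∂(𝓝.Qto p x)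

/-- Asymptotic variance terms `v_{p,n}(φ)` (with `Q_{n,n} = Id`). -/
def v (𝓝 : FKx E n) (p : ℕ) (φ : E × E → ℝ) : ℝ≥0∞ :=
  if p = n then
    𝓝.gammaN Set.univ * (∫⁻ z, ENNReal.ofReal ((φ z) ^ 2) ∂𝓝.gammaN)
        / (𝓝.gammaN Set.univ) ^ 2
      - ENNReal.ofReal ((∫ z, φ z ∂𝓝.etaN) ^ 2)
  else
    𝓝.gamma p Set.univ * (∫⁻ x, ENNReal.ofReal ((𝓝.Qf p φ x) ^ 2) ∂(𝓝.gamma p))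
        / (𝓝.gammaN Set.univ) ^ 2
      - ENNReal.ofReal ((∫ z, φ z ∂𝓝.etaN) ^ 2)

/-- Updated asymptotic variance terms `v̂_{p,n}(φ) = v_{p,n}(G_n·φ)/η_n(G_n)²`. -/
def vhat (𝓝 : FKx E n) (p : ℕ) (φ : E × E → ℝ) : ℝ≥0∞ :=
  𝓝.v p (fun z => (𝓝.Gn z).toReal * φ z)
    / ENNReal.ofReal ((∫ z, (𝓝.Gn z).toReal ∂𝓝.etaN) ^ 2)

/-- Updated asymptotic variance map `σ̂²(φ)`. -/
def varHat (𝓝 : FKx E n) (φ : E × E → ℝ) : ℝ≥0∞ := ∑ p ∈ Finset.range (n + 1), 𝓝.vhat p φ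

/-- The class `F̂` of relevant test functions for the updated terminal measure. -/
def memFhat (𝓝 : FKx E n) (φ : E × E → ℝ) : Prop :=
  Integrable φ 𝓝.etaHatN ∧ 𝓝.varHat φ ≠ ∞

end FKx

/-- The `φ`-extended model `M^φ` of a model `M`: the terminal kernel becomes
`M_n ⊗ Id` and the terminal potential becomes `(G_n·φ) ⊗ φ^{-1}`. -/
def FK.ext {n : ℕ} (𝓜 : FK E n) (φ : E → ℝ) : FKx E n where
  init := 𝓜.init
  M := 𝓜.M
  Mn := fun x => (𝓜.M n x).map (fun y => (y, y))
  G := 𝓜.G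
  Gn := fun z => 𝓜.G n z.1 * ENNReal.ofReal (φ z.1) * (ENNReal.ofReal (φ z.2))⁻¹

/-- Application of a standard knot `(t,R,K)`, `1 ≤ t < n`, to an extended model. -/
def knotApplyX {n : ℕ} (t : ℕ) (R K : E → Measure E) (𝓝 : FKx E n) : FKx E n where
  init := 𝓝.init
  M := fun p =>
    if p = t then R
    else if p = t + 1 then kcomp (twist K (𝓝.G t)) (𝓝.M (t + 1))
    else 𝓝.M p
  Mn := if t + 1 = n then kcomp (twist K (𝓝.G t)) 𝓝.Mn else 𝓝.Mn
  G := fun p => if p = t then kap K (𝓝.G t) else 𝓝.G p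
  Gn := 𝓝.Gn

/-- Application of a standard knot `(0,R₀,K)` at time `0` to an extended model. -/
def knotApplyX0 {n : ℕ} (R0 : Measure E) (K : E → Measure E) (𝓝 : FKx E n) : FKx E n where
  init := R0
  M := fun p => if p = 1 then kcomp (twist K (𝓝.G 0)) (𝓝.M 1) else 𝓝.M p
  Mn := if n = 1 then kcomp (twist K (𝓝.G 0)) 𝓝.Mn else 𝓝.Mn
  G := fun p => if p = 0 then kap K (𝓝.G 0) else 𝓝.G p
  Gn := 𝓝.Gn

/-- Application of a terminal knot `(n,R,K)` to an extended model, written with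
respect to the decomposition `M_n = P_1 ⊗ P_2`, `G_n = H ⊗ φ^{-1}` (with `P_1 = RK`):
`M*_n = R ⊗ K^H P_2` and `G*_n = K(H) ⊗ φ^{-1}`, all other components unchanged. -/
def termKnotApply {n : ℕ} (R K P2 : E → Measure E) (H : E → ℝ≥0∞) (φ : E → ℝ)
    (𝓝 : FKx E n) : FKx E n where
  init := 𝓝.init
  M := 𝓝.M
  Mn := ktens R (kcomp (twist K H) P2)
  G := 𝓝.G
  Gn := fun z => kap K H z.1 * (ENNReal.ofReal (φ z.2))⁻¹

/-- Terminal-knot model-compatibility of an extended model w.r.t. a reference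
terminal potential `Gref` and target function `φ`: `M_n = U ⊗ V^{G_n·φ}` and
`G_n = V(G_n·φ) ⊗ φ^{-1}` for some Markov kernels `U`, `V`. -/
def TermCompatible {n : ℕ} (𝓝 : FKx E n) (Gref : E → ℝ≥0∞) (φ : E → ℝ) : Prop :=
  ∃ U V : E → Measure E, IsKernel U ∧ IsKernel V ∧
    𝓝.Mn = ktens U (twist V (fun y => Gref y * ENNReal.ofReal (φ y))) ∧
    𝓝.Gn = fun z =>
      kap V (fun y => Gref y * ENNReal.ofReal (φ y)) z.1 * (ENNReal.ofReal (φ z.2))⁻¹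

/-- One application of a (standard or terminal) knot to an extended model, relative to
a reference terminal potential `Gref` and target function `φ`. -/
def XStep {n : ℕ} (Gref : E → ℝ≥0∞) (φ : E → ℝ) (𝓝' 𝓝 : FKx E n) : Prop :=
  (∃ (R0 : Measure E) (K : E → Measure E), IsProbabilityMeasure R0 ∧ IsKernel K ∧
      R0.bind K = 𝓝.init ∧ 𝓝' = knotApplyX0 R0 K 𝓝) ∨
  (∃ (t : ℕ) (R K : E → Measure E), 1 ≤ t ∧ t < n ∧ IsKernel R ∧ IsKernel K ∧
      kcomp R K = 𝓝.M t ∧ 𝓝' = knotApplyX t R K 𝓝) ∨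
  (∃ R K U V : E → Measure E, IsKernel R ∧ IsKernel K ∧ IsKernel U ∧ IsKernel V ∧
      𝓝.Mn = ktens U (twist V (fun y => Gref y * ENNReal.ofReal (φ y))) ∧
      𝓝.Gn = (fun z =>
        kap V (fun y => Gref y * ENNReal.ofReal (φ y)) z.1 * (ENNReal.ofReal (φ z.2))⁻¹) ∧
      kcomp R K = U ∧
      𝓝' = termKnotApply R K (twist V (fun y => Gref y * ENNReal.ofReal (φ y)))
              (kap V (fun y => Gref y * ENNReal.ofReal (φ y))) φ 𝓝)

/-- A finite (nonempty) sequence of (standard or terminal) knot applications. -/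
def XChain {n : ℕ} (Gref : E → ℝ≥0∞) (φ : E → ℝ) : FKx E n → FKx E n → Prop :=
  Relation.TransGen (XStep Gref φ)

/-- The partial order `M* ≼_φ M°` with respect to a reference model `M`:
`M*` is obtained from `M°` by knots, and `M°` is obtained from `M^φ` by knots. -/
def XOrder {n : ℕ} (𝓜 : FK E n) (φ : E → ℝ) (𝓝' 𝓝 : FKx E n) : Prop :=
  XChain (𝓜.G n) φ 𝓝' 𝓝 ∧ XChain (𝓜.G n) φ 𝓝 (𝓜.ext φ)

end KnotsPaper

/-!
Write `M*` for the model after the knot. Nothing changes before time `t`, and the twisted kernel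
is built so that `K(G_t)(y) K^{G_t}(y, ·) = K(y, ·) G_t`; hence `γ*_p = γ_p` and
`Q*_{p,n} = Q_{p,n}` for every `p ≠ t`, while `γ*_t K = γ_t` and
`Q*_{t,n}(y, ·) = (K Q_{t,n})(y, ·)`.
In particular `γ*_n = γ_n`, and the terms of the two variances agree except the `t`-th, where
Jensen's inequality `(K Q_{t,n}φ)² ≤ K((Q_{t,n}φ)²)`, integrated against `γ*_t`, gives
`γ*_t((Q*_{t,n}φ)²) ≤ γ_t((Q_{t,n}φ)²)`.
-/

namespace KnotsPaper

section Measures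

variable {α β : Type*} [MeasurableSpace β]

theorem kap_smul_twist {K : α → Measure β} {H : β → ℝ≥0∞} {x : α} (hx : kap K H x ≠ ∞) :
    kap K H x • twist K H x = (K x).withDensity H := by
  by_cases h0 : kap K H x = 0
  · have : (K x).withDensity H = 0 := by
      rw [← Measure.measure_univ_eq_zero, withDensity_apply _ MeasurableSet.univ,
        setLIntegral_univ]
      exact h0
    simp [h0, this]
  · rw [twist, if_neg h0, smul_smul, ENNReal.mul_inv_cancel h0 hx, one_smul]

variable [MeasurableSpace α]

theorem measurable_kap {K : α → Measure β} {H : β → ℝ≥0∞} (hK : Measurable K)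
    (hH : Measurable H) : Measurable (kap K H) :=
  (Measure.measurable_lintegral hH).comp hK

theorem measurable_smul_kernel {c : α → ℝ≥0∞} {K : α → Measure β} (hc : Measurable c)
    (hK : Measurable K) : Measurable fun x => c x • K x := by
  refine Measure.measurable_of_measurable_coe _ fun s hs => ?_
  simp only [Measure.smul_apply, smul_eq_mul]
  exact hc.mul ((Measure.measurable_coe hs).comp hK)

theorem measurable_withDensity_kernel {K : α → Measure β} {H : β → ℝ≥0∞} (hK : Measurable K)
    (hH : Measurable H) : Measurable fun x => (K x).withDensity H := by
  refine Measure.measurable_of_measurable_coe _ fun s hs => ?_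
  simp only [withDensity_apply _ hs, ← lintegral_indicator hs]
  exact (Measure.measurable_lintegral (hH.indicator hs)).comp hK

theorem measurable_twist {K : α → Measure β} {H : β → ℝ≥0∞} (hK : Measurable K)
    (hH : Measurable H) : Measurable (twist K H) :=
  Measurable.ite (measurable_kap hK hH (measurableSet_singleton 0)) hK
    (measurable_smul_kernel (measurable_kap hK hH).inv (measurable_withDensity_kernel hK hH))

theorem withDensity_bind {μ : Measure α} {H : α → ℝ≥0∞} {f : α → Measure β} (hH : Measurable H)
    (hf : Measurable f) : (μ.withDensity H).bind f = μ.bind fun x => H x • f x := by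
  ext s hs
  rw [Measure.bind_apply hs hf.aemeasurable,
    Measure.bind_apply hs (measurable_smul_kernel hH hf).aemeasurable,
    lintegral_withDensity_eq_lintegral_mul μ hH (g := fun x => f x s)
      ((Measure.measurable_coe hs).comp hf)]
  rfl

theorem bind_withDensity {μ : Measure α} {K : α → Measure β} {H : β → ℝ≥0∞} (hK : Measurable K)
    (hH : Measurable H) :
    μ.bind (fun x => (K x).withDensity H) = (μ.bind K).withDensity H := by
  ext s hs
  rw [Measure.bind_apply hs (measurable_withDensity_kernel hK hH).aemeasurable,
    withDensity_apply _ hs, ← lintegral_indicator hs,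
    Measure.lintegral_bind hK.aemeasurable (hH.indicator hs).aemeasurable]
  simp_rw [withDensity_apply _ hs, ← lintegral_indicator hs]

theorem bind_apply_univ {μ : Measure α} {K : α → Measure β} (hK : IsKernel K) :
    (μ.bind K) Set.univ = μ Set.univ := by
  simp [Measure.bind_apply MeasurableSet.univ hK.1.aemeasurable, (hK.2 _).measure_univ]

theorem ae_kap_ne_top_of_bind {μ : Measure α} {ν : Measure β} {K : α → Measure β}
    {H : β → ℝ≥0∞} (hK : Measurable K) (hH : Measurable H) (hμ : μ.bind K = ν)
    (hν : ∫⁻ y, H y ∂ν ≠ ∞) : ∀ᵐ x ∂μ, kap K H x ≠ ∞ := by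
  rw [← hμ, Measure.lintegral_bind hK.aemeasurable hH.aemeasurable] at hν
  exact (ae_lt_top (measurable_kap hK hH) hν).mono fun x hx => hx.ne

theorem ae_bind_of_forall {μ : Measure α} {K : α → Measure β} (hK : Measurable K) {P : β → Prop}
    (hP : MeasurableSet {y | P y}) (h : ∀ x, ∀ᵐ y ∂K x, P y) : ∀ᵐ y ∂μ.bind K, P y := by
  rw [ae_iff, ← Set.compl_ofPred, Measure.bind_apply hP.compl hK.aemeasurable]
  have hzero : ∀ x, K x {y | P y}ᶜ = 0 := fun x => h x
  simp [hzero]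

theorem withDensity_kap_bind_twist {μ : Measure α} {K : α → Measure β} {H : β → ℝ≥0∞}
    (hK : Measurable K) (hH : Measurable H) (hfin : ∀ᵐ x ∂μ, kap K H x ≠ ∞) :
    (μ.withDensity (kap K H)).bind (twist K H) = (μ.bind K).withDensity H := by
  rw [withDensity_bind (measurable_kap hK hH) (measurable_twist hK hH),
    Measure.bind_congr_right (hfin.mono fun x hx => kap_smul_twist hx), bind_withDensity hK hH]

theorem integral_bind {F : Type*} [NormedAddCommGroup F] [NormedSpace ℝ F] {μ : Measure α}
    {κ : α → Measure β} (hκ : Measurable κ) {f : β → F} (hf : Integrable f (μ.bind κ)) :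
    ∫ y, f y ∂μ.bind κ = ∫ x, ∫ y, f y ∂κ x ∂μ :=
  ProbabilityTheory.Kernel.integral_comp (η := ⟨κ, hκ⟩)
    (κ := ProbabilityTheory.Kernel.const Unit μ) (a := ()) (f := f) hf

theorem aestronglyMeasurable_integral_of_bind {F : Type*} [NormedAddCommGroup F] [NormedSpace ℝ F]
    {μ : Measure α} {κ : α → Measure β} (hκ : Measurable κ) {f : β → F}
    (hf : AEStronglyMeasurable f (μ.bind κ)) :
    AEStronglyMeasurable (fun x => ∫ y, f y ∂κ x) μ :=
  hf.integral_kernel_comp (η := ⟨κ, hκ⟩) (κ := ProbabilityTheory.Kernel.const Unit μ) (a := ())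

theorem ofReal_sq_integral_le_lintegral {μ : Measure α} [IsProbabilityMeasure μ] {f : α → ℝ}
    (hf : AEStronglyMeasurable f μ) :
    ENNReal.ofReal ((∫ x, f x ∂μ) ^ 2) ≤ ∫⁻ x, ENNReal.ofReal (f x ^ 2) ∂μ := by
  by_cases hfin : ∫⁻ x, ENNReal.ofReal (f x ^ 2) ∂μ = ∞
  · simp [hfin]
  have hsq_nonneg : 0 ≤ᵐ[μ] fun x => f x ^ 2 := ae_of_all _ fun x => sq_nonneg (f x)
  have hsq : Integrable (fun x => f x ^ 2) μ :=
    (lintegral_ofReal_ne_top_iff_integrable (hf.pow 2) hsq_nonneg).1 hfin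
  have hvar := ProbabilityTheory.variance_nonneg f μ
  rw [ProbabilityTheory.variance_eq_sub ((memLp_two_iff_integrable_sq hf).2 hsq)] at hvar
  rw [← ofReal_integral_eq_lintegral_ofReal hsq hsq_nonneg]
  exact ENNReal.ofReal_le_ofReal (by simpa using hvar)

theorem ofReal_sq_integral_bind_le {μ : Measure α} [IsProbabilityMeasure μ] {κ : α → Measure β}
    (hκ : Measurable κ) (f : β → ℝ) :
    ENNReal.ofReal ((∫ y, f y ∂μ.bind κ) ^ 2)
      ≤ ∫⁻ x, ENNReal.ofReal ((∫ y, f y ∂κ x) ^ 2) ∂μ := by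
  by_cases hf : Integrable f (μ.bind κ)
  · rw [integral_bind hκ hf]
    exact ofReal_sq_integral_le_lintegral (aestronglyMeasurable_integral_of_bind hκ hf.1)
  · simp [integral_undef hf]

variable {γ : Type*} [MeasurableSpace γ]

theorem lintegral_sq_integral_le_of_bind {μ' : Measure α} {μ : Measure β} {K : α → Measure β}
    {Q : β → Measure γ} {Q' : α → Measure γ} (hK : IsKernel K) (hμ : μ'.bind K = μ)
    (hQ : Measurable Q) (hQ' : ∀ᵐ x ∂μ', Q' x = (K x).bind Q) {f : γ → ℝ}
    (hf : AEStronglyMeasurable f (μ.bind Q)) :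
    ∫⁻ x, ENNReal.ofReal ((∫ z, f z ∂Q' x) ^ 2) ∂μ'
      ≤ ∫⁻ y, ENNReal.ofReal ((∫ z, f z ∂Q y) ^ 2) ∂μ := by
  have hmeas : AEMeasurable (fun y => ENNReal.ofReal ((∫ z, f z ∂Q y) ^ 2)) (μ'.bind K) := by
    rw [hμ]
    exact ((aestronglyMeasurable_integral_of_bind hQ hf).aemeasurable.pow_const 2).ennreal_ofReal
  calc ∫⁻ x, ENNReal.ofReal ((∫ z, f z ∂Q' x) ^ 2) ∂μ'
      = ∫⁻ x, ENNReal.ofReal ((∫ z, f z ∂(K x).bind Q) ^ 2) ∂μ' :=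
        lintegral_congr_ae (hQ'.mono fun x hx => by simp only [hx])
    _ ≤ ∫⁻ x, ∫⁻ y, ENNReal.ofReal ((∫ z, f z ∂Q y) ^ 2) ∂K x ∂μ' := by
        refine lintegral_mono fun x => ?_
        have := hK.2 x
        exact ofReal_sq_integral_bind_le hQ f
    _ = ∫⁻ y, ENNReal.ofReal ((∫ z, f z ∂Q y) ^ 2) ∂μ := by
        rw [← Measure.lintegral_bind hK.1.aemeasurable hmeas, hμ]

end Measures

namespace FK

variable {E : Type*} [MeasurableSpace E] {n : ℕ} {𝓜 𝓜' : FK E n}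

theorem Reg.measurable_G (h : 𝓜.Reg) {p : ℕ} (hp : p ≤ n) : Measurable (𝓜.G p) :=
  h.2.2.1 p hp

theorem Reg.measurable_M (h : 𝓜.Reg) {p : ℕ} (h1 : 1 ≤ p) (hp : p ≤ n) : Measurable (𝓜.M p) :=
  (h.2.1 p h1 hp).1

theorem gamma_succ (𝓜 : FK E n) (p : ℕ) :
    𝓜.gamma (p + 1) = ((𝓜.gamma p).withDensity (𝓜.G p)).bind (𝓜.M (p + 1)) := rfl

theorem Qto_of_le (𝓜 : FK E n) {p : ℕ} (h : n ≤ p) : 𝓜.Qto p = fun x => Measure.dirac x := by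
  rw [FK.Qto, dif_pos h]

theorem Qto_of_lt (𝓜 : FK E n) {p : ℕ} (h : p < n) (x : E) :
    𝓜.Qto p x = 𝓜.G p x • (𝓜.M (p + 1) x).bind (𝓜.Qto (p + 1)) := by
  rw [FK.Qto, dif_neg (not_le.2 h), Measure.bind_smul]

theorem Reg.measurable_Qto (h : 𝓜.Reg) (p : ℕ) : Measurable (𝓜.Qto p) := by
  by_cases hp : n ≤ p
  · rw [Qto_of_le 𝓜 hp]
    exact Measure.measurable_dirac
  · have hp : p < n := not_le.1 hp
    rw [funext (Qto_of_lt 𝓜 hp)]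
    exact measurable_smul_kernel (h.measurable_G hp.le)
      ((Measure.measurable_bind' (h.measurable_Qto (p + 1))).comp (h.measurable_M (by omega) hp))
termination_by n - p

theorem Reg.bind_gamma_Qto (h : 𝓜.Reg) {p : ℕ} (hp : p ≤ n) :
    (𝓜.gamma p).bind (𝓜.Qto p) = 𝓜.gamma n := by
  rcases hp.eq_or_lt with rfl | hp
  · rw [Qto_of_le 𝓜 le_rfl, Measure.bind_dirac]
  · have hM := h.measurable_M (p := p + 1) (by omega) hp
    have hQ := h.measurable_Qto (p + 1)
    rw [funext (Qto_of_lt 𝓜 hp),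
      ← withDensity_bind (h.measurable_G hp.le) (f := fun x => (𝓜.M (p + 1) x).bind (𝓜.Qto (p + 1)))
        ((Measure.measurable_bind' hQ).comp hM),
      ← Measure.bind_bind hM.aemeasurable hQ.aemeasurable, ← gamma_succ, h.bind_gamma_Qto hp]
termination_by n - p

theorem gamma_eq_of_le {s p : ℕ} (hsp : s ≤ p) (hs : 𝓜'.gamma s = 𝓜.gamma s)
    (hG : ∀ q, s ≤ q → q < p → 𝓜'.G q = 𝓜.G q) (hM : ∀ q, s < q → q ≤ p → 𝓜'.M q = 𝓜.M q) :
    𝓜'.gamma p = 𝓜.gamma p := by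
  induction p, hsp using Nat.le_induction with
  | base => exact hs
  | succ p hsp ih =>
    rw [gamma_succ, gamma_succ, ih (fun q h1 h2 => hG q h1 (by omega))
      (fun q h1 h2 => hM q h1 (by omega)), hG p hsp (by omega), hM (p + 1) (by omega) le_rfl]

theorem Qto_eq_of_le {p s : ℕ} (hps : p ≤ s) (hs : 𝓜'.Qto s = 𝓜.Qto s)
    (hG : ∀ q, p ≤ q → q < s → 𝓜'.G q = 𝓜.G q) (hM : ∀ q, p < q → q ≤ s → 𝓜'.M q = 𝓜.M q) :
    𝓜'.Qto p = 𝓜.Qto p := by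
  induction hps using Nat.decreasingInduction with
  | self => exact hs
  | of_succ p hps ih =>
    by_cases hpn : n ≤ p
    · rw [Qto_of_le 𝓜' hpn, Qto_of_le 𝓜 hpn]
    funext x
    rw [Qto_of_lt 𝓜' (not_le.1 hpn), Qto_of_lt 𝓜 (not_le.1 hpn), hG p le_rfl hps,
      hM (p + 1) (by omega) hps, ih (fun q h1 h2 => hG q (by omega) h2)
      (fun q h1 h2 => hM q (by omega) h2)]

theorem v_eq_zero_of_gamma_univ_eq_top (h : 𝓜.gamma n Set.univ = ∞) (p : ℕ) (φ : E → ℝ) :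
    𝓜.v p φ = 0 := by
  simp [FK.v, h]

theorem aestronglyMeasurable_gamma_of_integrable_eta (h : 𝓜.gamma n Set.univ ≠ ∞) {φ : E → ℝ}
    (hφ : Integrable φ (𝓜.eta n)) : AEStronglyMeasurable φ (𝓜.gamma n) :=
  ⟨_, hφ.1.stronglyMeasurable_mk,
    (Measure.ae_ennreal_smul_measure_iff (ENNReal.inv_ne_zero.2 h)).1 hφ.1.ae_eq_mk⟩

theorem v_le_of_bind {p : ℕ} {K : E → Measure E} (hK : IsKernel K)
    (hγn : 𝓜'.gamma n = 𝓜.gamma n) (hγ : (𝓜'.gamma p).bind K = 𝓜.gamma p)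
    (hQm : Measurable (𝓜.Qto p)) (hQ : ∀ᵐ y ∂𝓜'.gamma p, 𝓜'.Qto p y = (K y).bind (𝓜.Qto p))
    {φ : E → ℝ} (hφ : AEStronglyMeasurable φ ((𝓜.gamma p).bind (𝓜.Qto p))) :
    𝓜'.v p φ ≤ 𝓜.v p φ := by
  have hmass : 𝓜'.gamma p Set.univ = 𝓜.gamma p Set.univ := by rw [← hγ, bind_apply_univ hK]
  rw [FK.v, FK.v, FK.eta, FK.eta, hγn, hmass]
  gcongr _ * ?_ / _ - _
  exact lintegral_sq_integral_le_of_bind hK hγ hQm hQ hφ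

theorem var_le_of_gamma_Qto {t : ℕ} {K : E → Measure E} (h𝓜 : 𝓜.Reg) (hK : IsKernel K)
    (ht : t < n) (hγ : ∀ p, p ≠ t → 𝓜'.gamma p = 𝓜.gamma p)
    (hQ : ∀ p, p ≠ t → 𝓜'.Qto p = 𝓜.Qto p) (hγt : (𝓜'.gamma t).bind K = 𝓜.gamma t)
    (hQt : ∀ᵐ y ∂𝓜'.gamma t, 𝓜'.Qto t y = (K y).bind (𝓜.Qto t)) {φ : E → ℝ}
    (hφ : Integrable φ (𝓜.eta n)) : 𝓜'.var φ ≤ 𝓜.var φ := by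
  have hγn := hγ n ht.ne'
  by_cases htop : 𝓜.gamma n Set.univ = ∞
  · simp [FK.var, v_eq_zero_of_gamma_univ_eq_top (hγn ▸ htop)]
  refine Finset.sum_le_sum fun p _ => ?_
  rcases eq_or_ne p t with rfl | hpt
  · refine v_le_of_bind hK hγn hγt (h𝓜.measurable_Qto p) hQt ?_
    rw [h𝓜.bind_gamma_Qto ht.le]
    exact aestronglyMeasurable_gamma_of_integrable_eta htop hφ
  · simp only [FK.v, FK.Qf, FK.eta, hγ p hpt, hQ p hpt, hγn, le_rfl]

/-- The common effect of `knotApply0` and `knotApply` at times `≥ t`. -/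
structure IsKnotTail (𝓜' 𝓜 : FK E n) (t : ℕ) (K : E → Measure E) : Prop where
  G_of_ne : ∀ p, p ≠ t → 𝓜'.G p = 𝓜.G p
  G_self : 𝓜'.G t = kap K (𝓜.G t)
  M_succ : 𝓜'.M (t + 1) = kcomp (twist K (𝓜.G t)) (𝓜.M (t + 1))
  M_of_gt : ∀ p, t + 1 < p → 𝓜'.M p = 𝓜.M p

namespace IsKnotTail

variable {t : ℕ} {K : E → Measure E}

theorem Qto_of_gt (h : IsKnotTail 𝓜' 𝓜 t K) {p : ℕ} (hp : t < p) : 𝓜'.Qto p = 𝓜.Qto p :=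
  Qto_eq_of_le (le_max_right n p)
    (by rw [Qto_of_le 𝓜' (le_max_left n p), Qto_of_le 𝓜 (le_max_left n p)])
    (fun q hq _ => h.G_of_ne q (by omega)) (fun q hq _ => h.M_of_gt q (by omega))

theorem Qto_self (h : IsKnotTail 𝓜' 𝓜 t K) (h𝓜 : 𝓜.Reg) (ht : t < n) {y : E}
    (hy : kap K (𝓜.G t) y ≠ ∞) : 𝓜'.Qto t y = (K y).bind (𝓜.Qto t) := by
  have hM := h𝓜.measurable_M (p := t + 1) (by omega) ht
  have hQ := h𝓜.measurable_Qto (t + 1)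
  rw [Qto_of_lt 𝓜' ht, h.G_self, h.M_succ, h.Qto_of_gt (Nat.lt_succ_self t), kcomp,
    Measure.bind_bind hM.aemeasurable hQ.aemeasurable, ← Measure.bind_smul, kap_smul_twist hy,
    withDensity_bind (h𝓜.measurable_G ht.le) (f := fun u => (𝓜.M (t + 1) u).bind (𝓜.Qto (t + 1)))
      ((Measure.measurable_bind' hQ).comp hM)]
  exact congrArg _ (funext fun u => (Qto_of_lt 𝓜 ht u).symm)

theorem gamma_of_gt (h : IsKnotTail 𝓜' 𝓜 t K) (h𝓜 : 𝓜.Reg) (hK : IsKernel K) (ht : t < n)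
    (hγ : (𝓜'.gamma t).bind K = 𝓜.gamma t) (hfin : ∀ᵐ y ∂𝓜'.gamma t, kap K (𝓜.G t) y ≠ ∞)
    {p : ℕ} (hp : t < p) : 𝓜'.gamma p = 𝓜.gamma p := by
  have hM := h𝓜.measurable_M (p := t + 1) (by omega) ht
  have hG := h𝓜.measurable_G ht.le
  have hsucc : 𝓜'.gamma (t + 1) = 𝓜.gamma (t + 1) := by
    rw [gamma_succ, gamma_succ, h.G_self, h.M_succ]
    unfold kcomp
    rw [← Measure.bind_bind (measurable_twist hK.1 hG).aemeasurable hM.aemeasurable,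
      withDensity_kap_bind_twist hK.1 hG hfin, hγ]
  exact gamma_eq_of_le hp hsucc (fun q hq _ => h.G_of_ne q (by omega))
    (fun q hq _ => h.M_of_gt q hq)

theorem var_le (h : IsKnotTail 𝓜' 𝓜 t K) (h𝓜 : 𝓜.Reg) (hK : IsKernel K) (ht : t < n)
    (hγ_lt : ∀ p, p < t → 𝓜'.gamma p = 𝓜.gamma p) (hQ_lt : ∀ p, p < t → 𝓜'.Qto p = 𝓜.Qto p)
    (hγ : (𝓜'.gamma t).bind K = 𝓜.gamma t) (hfin : ∀ᵐ y ∂𝓜'.gamma t, kap K (𝓜.G t) y ≠ ∞)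
    {φ : E → ℝ} (hφ : Integrable φ (𝓜.eta n)) : 𝓜'.var φ ≤ 𝓜.var φ :=
  var_le_of_gamma_Qto h𝓜 hK ht
    (fun p hp => (lt_or_gt_of_ne hp).elim (hγ_lt p) (h.gamma_of_gt h𝓜 hK ht hγ hfin))
    (fun p hp => (lt_or_gt_of_ne hp).elim (hQ_lt p) h.Qto_of_gt) hγ
    (hfin.mono fun _ hy => h.Qto_self h𝓜 ht hy) hφ

end IsKnotTail

end FK

section KnotApplication

variable {E : Type*} [MeasurableSpace E] {n : ℕ} {𝓜 : FK E n}

theorem isKnotTail_knotApply0 (R0 : Measure E) (K : E → Measure E) (𝓜 : FK E n) :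
    (knotApply0 R0 K 𝓜).IsKnotTail 𝓜 0 K where
  G_of_ne _ hp := if_neg hp
  G_self := by simp [knotApply0]
  M_succ := by simp [knotApply0]
  M_of_gt _ hp := if_neg (by omega)

theorem knotApply0_integral_gamma_eq_and_var_le (h𝓜 : 𝓜.Reg) (hn : 0 < n) {R0 : Measure E}
    {K : E → Measure E} (hK : IsKernel K) (hR0K : R0.bind K = 𝓜.init) {φ : E → ℝ} (hφ : 𝓜.memF φ) :
    (∫ x, φ x ∂((knotApply0 R0 K 𝓜).gamma n) = ∫ x, φ x ∂(𝓜.gamma n)) ∧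
      (knotApply0 R0 K 𝓜).var φ ≤ 𝓜.var φ := by
  have h := isKnotTail_knotApply0 R0 K 𝓜
  have hfin : ∀ᵐ y ∂(R0), kap K (𝓜.G 0) y ≠ ∞ :=
    ae_kap_ne_top_of_bind hK.1 (h𝓜.measurable_G n.zero_le) hR0K h𝓜.2.2.2.2.1
  exact ⟨by rw [h.gamma_of_gt h𝓜 hK hn hR0K hfin hn],
    h.var_le h𝓜 hK hn (fun _ hp => absurd hp (Nat.not_lt_zero _))
      (fun _ hp => absurd hp (Nat.not_lt_zero _)) hR0K hfin hφ.1⟩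

variable {t : ℕ} {R K : E → Measure E}

theorem isKnotTail_knotApply (t : ℕ) (R K : E → Measure E) (𝓜 : FK E n) :
    (knotApply t R K 𝓜).IsKnotTail 𝓜 t K where
  G_of_ne _ hp := if_neg hp
  G_self := if_pos rfl
  M_succ := (if_neg (by omega)).trans (if_pos rfl)
  M_of_gt _ hp := (if_neg (by omega)).trans (if_neg (by omega))

theorem gamma_knotApply_of_le {p : ℕ} (hp : p ≤ t) :
    (knotApply (t + 1) R K 𝓜).gamma p = 𝓜.gamma p :=
  FK.gamma_eq_of_le p.zero_le rfl (fun _ _ hq => if_neg (by omega))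
    (fun _ _ hq => (if_neg (by omega)).trans (if_neg (by omega)))

theorem gamma_knotApply_self :
    (knotApply (t + 1) R K 𝓜).gamma (t + 1) = ((𝓜.gamma t).withDensity (𝓜.G t)).bind R := by
  rw [FK.gamma_succ, gamma_knotApply_of_le le_rfl]
  congr 2
  · exact if_neg (by omega)
  · exact if_pos rfl

theorem bind_gamma_knotApply (hR : Measurable R) (hK : Measurable K)
    (hRK : kcomp R K = 𝓜.M (t + 1)) :
    ((knotApply (t + 1) R K 𝓜).gamma (t + 1)).bind K = 𝓜.gamma (t + 1) := by
  rw [gamma_knotApply_self, Measure.bind_bind hR.aemeasurable hK.aemeasurable]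
  exact congrArg _ hRK

theorem ae_kap_ne_top_of_kcomp (h𝓜 : 𝓜.Reg) (htn : t + 1 < n) (hK : Measurable K)
    (hRK : kcomp R K = 𝓜.M (t + 1)) (x : E) : ∀ᵐ y ∂(R x), kap K (𝓜.G (t + 1)) y ≠ ∞ :=
  ae_kap_ne_top_of_bind hK (h𝓜.measurable_G htn.le) (congrFun hRK x)
    (h𝓜.2.2.2.2.2 (t + 1) x t.succ_pos htn.le)

theorem ae_kap_ne_top_knotApply (h𝓜 : 𝓜.Reg) (htn : t + 1 < n) (hR : Measurable R)
    (hK : Measurable K) (hRK : kcomp R K = 𝓜.M (t + 1)) :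
    ∀ᵐ y ∂(knotApply (t + 1) R K 𝓜).gamma (t + 1), kap K (𝓜.G (t + 1)) y ≠ ∞ := by
  rw [gamma_knotApply_self]
  exact ae_bind_of_forall hR ((measurable_kap hK (h𝓜.measurable_G htn.le))
    (measurableSet_singleton ∞).compl) (ae_kap_ne_top_of_kcomp h𝓜 htn hK hRK)

theorem Qto_knotApply_of_le (h𝓜 : 𝓜.Reg) (htn : t + 1 < n) (hK : Measurable K)
    (hRK : kcomp R K = 𝓜.M (t + 1)) {p : ℕ} (hp : p ≤ t) :
    (knotApply (t + 1) R K 𝓜).Qto p = 𝓜.Qto p := by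
  set 𝓜' := knotApply (t + 1) R K 𝓜
  have h := isKnotTail_knotApply (t + 1) R K 𝓜
  have hQ := h𝓜.measurable_Qto (t + 1)
  have hQt : 𝓜'.Qto t = 𝓜.Qto t := by
    funext x
    have hM : 𝓜'.M (t + 1) = R := if_pos rfl
    rw [FK.Qto_of_lt 𝓜' (by omega), FK.Qto_of_lt 𝓜 (by omega), h.G_of_ne t (by omega), hM,
      Measure.bind_congr_right ((ae_kap_ne_top_of_kcomp h𝓜 htn hK hRK x).mono
        fun y hy => h.Qto_self h𝓜 htn hy),
      ← Measure.bind_bind hK.aemeasurable hQ.aemeasurable]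
    exact congrArg (fun μ => 𝓜.G t x • μ.bind (𝓜.Qto (t + 1))) (congrFun hRK x)
  exact FK.Qto_eq_of_le hp hQt (fun q _ hq => h.G_of_ne q (by omega))
    (fun _ _ hq => (if_neg (by omega)).trans (if_neg (by omega)))

theorem knotApply_integral_gamma_eq_and_var_le (h𝓜 : 𝓜.Reg) (htn : t + 1 < n) (hR : IsKernel R)
    (hK : IsKernel K) (hRK : kcomp R K = 𝓜.M (t + 1)) {φ : E → ℝ} (hφ : 𝓜.memF φ) :
    (∫ x, φ x ∂((knotApply (t + 1) R K 𝓜).gamma n) = ∫ x, φ x ∂(𝓜.gamma n)) ∧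
      (knotApply (t + 1) R K 𝓜).var φ ≤ 𝓜.var φ := by
  have h := isKnotTail_knotApply (t + 1) R K 𝓜
  have hγ := bind_gamma_knotApply hR.1 hK.1 hRK
  have hfin := ae_kap_ne_top_knotApply h𝓜 htn hR.1 hK.1 hRK
  exact ⟨by rw [h.gamma_of_gt h𝓜 hK htn hγ hfin htn],
    h.var_le h𝓜 hK htn (fun _ hp => gamma_knotApply_of_le (by omega))
      (fun _ hp => Qto_knotApply_of_le h𝓜 htn hK.1 hRK (by omega)) hγ hfin hφ.1⟩

end KnotApplication

/-- Theorem 3.1, variance reduction from a single knot: if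
`K = (t,R,K)` is a knot compatible with `M` (`t < n`) and `M* = K ∗ M`, then for every
`φ ∈ F(M)` the terminal predictive measures agree, `γ_n(φ) = γ*_n(φ)`, and the
asymptotic variances satisfy `σ²_*(φ) ≤ σ²(φ)`.  (The case `t = 0`, where `R` is a
probability measure, and the case `1 ≤ t < n` are stated separately.) -/
theorem statement3 {E : Type*} [MeasurableSpace E] {n : ℕ}
    (𝓜 : FK E n) (h𝓜 : 𝓜.Reg) :
    (∀ (R0 : Measure E) (K : E → Measure E), 0 < n →
      IsProbabilityMeasure R0 → IsKernel K → R0.bind K = 𝓜.init →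
      ∀ φ : E → ℝ, 𝓜.memF φ →
        (∫ x, φ x ∂((knotApply0 R0 K 𝓜).gamma n) = ∫ x, φ x ∂(𝓜.gamma n)) ∧
        (knotApply0 R0 K 𝓜).var φ ≤ 𝓜.var φ) ∧
    (∀ (t : ℕ) (R K : E → Measure E), 1 ≤ t → t < n →
      IsKernel R → IsKernel K → kcomp R K = 𝓜.M t →
      ∀ φ : E → ℝ, 𝓜.memF φ →
        (∫ x, φ x ∂((knotApply t R K 𝓜).gamma n) = ∫ x, φ x ∂(𝓜.gamma n)) ∧
        (knotApply t R K 𝓜).var φ ≤ 𝓜.var φ) := by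
  refine ⟨fun R0 K hn _ hK hR0K φ hφ =>
    knotApply0_integral_gamma_eq_and_var_le h𝓜 hn hK hR0K hφ, ?_⟩
  rintro t R K ht1 htn hR hK hRK φ hφ
  obtain ⟨s, rfl⟩ := Nat.exists_eq_add_of_le' ht1
  exact knotApply_integral_gamma_eq_and_var_le h𝓜 htn hR hK hRK hφ

end KnotsPaper
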